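/- Suppose 1 ∈ U and U contains elements u, v, w such that 1, u, v, w are pairwise non-±-equal. Then R(U) is a subring of ℂ if and only if for every pair of elementary monomials z and z', the product z·z' is a ℤ[P]-linear combination of elementary monomials (a finite sum Σᵢ cᵢ·zᵢ with cᵢ ∈ ℤ[P] and zᵢ elementary monomials). -/

import Mathlib

open Complex

/-- The bracket `[x,y] = x * conj y - y * conj x`. -/
noncomputable def brkt (x y : ℂ) : ℂ := x * (starRingEnd ℂ) y - y * (starRingEnd ℂ) x

/-- `lineInt α β p q` is the intersection point `I_{α,β}(p,q)` of the line through `p`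
with direction `α` and the line through `q` with direction `β` (for unit `α ≠ ±β`),
given by the formula of Buhler et al. -/
noncomputable def lineInt (α β p q : ℂ) : ℂ :=
  brkt α p / brkt α β * β + brkt β q / brkt β α * α

/-- The sets `S n` in the inductive construction. -/
def stepSet (U : Set ℂ) : ℕ → Set ℂ
  | 0 => {0, 1}
  | n + 1 => {z | ∃ α ∈ U, ∃ β ∈ U, α ≠ β ∧ α ≠ -β ∧
      ∃ p ∈ stepSet U n, ∃ q ∈ stepSet U n, z = lineInt α β p q}

/-- `RU U = ⋃ n, S n`. -/
def RU (U : Set ℂ) : Set ℂ := ⋃ n, stepSet U n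

/-- Elementary monomials of `U`. -/
def IsElem (U : Set ℂ) (z : ℂ) : Prop :=
  ∃ α ∈ U, ∃ β ∈ U, α ≠ β ∧ α ≠ -β ∧ z = lineInt α β 0 1

/-- Monomials of `U`, defined inductively. -/
inductive IsMonomial (U : Set ℂ) : ℂ → Prop
  | elementary (α β : ℂ) (hα : α ∈ U) (hβ : β ∈ U) (h1 : α ≠ β) (h2 : α ≠ -β) :
      IsMonomial U (lineInt α β 0 1)
  | step (α β m : ℂ) (hα : α ∈ U) (hβ : β ∈ U) (h1 : α ≠ β) (h2 : α ≠ -β)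
      (hm : IsMonomial U m) : IsMonomial U (lineInt α β 0 m)

/-- `P`: the real numbers arising as length-two monomials `I_{γ,δ}(0,z)` on the real axis. -/
def projSet (U : Set ℂ) : Set ℝ :=
  {r | ∃ γ ∈ U, ∃ δ ∈ U, γ ≠ δ ∧ γ ≠ -δ ∧ ∃ z, IsElem U z ∧ (r : ℂ) = lineInt γ δ 0 z}

/-- `m` is a `ℤ[P]`-linear combination of elementary monomials of `U`. -/
def IsZPComb (U : Set ℂ) (m : ℂ) : Prop :=
  ∃ (n : ℕ) (c : Fin n → ℝ) (z : Fin n → ℂ),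
    (∀ i, c i ∈ Subring.closure (projSet U)) ∧ (∀ i, IsElem U (z i)) ∧
    m = ∑ i, (c i : ℂ) * z i

/-!
Write `proj α β` for the projection `I_{α,β}(0, ·)` onto `ℝ α` along `β`. It is `ℝ`-linear and
`I_{α,β}(p, q) = proj β α p + proj α β q`. The projection of an elementary monomial is a
length-two monomial, which is an element of `P` times an elementary monomial (or, when its
second direction is `±1`, differs from one by an element of `P`); hence `R(U)` lies in the
`ℤ[P]`-span of the elementary monomials. Conversely, with three pairwise transversal directions
`1, u, v`, `R(U)` is closed under addition (carry one summand to another line and intersect),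
negation (projecting around a triangle of directions reverses a vector) and multiplication by
elements of `P`, so it is that span. The span is an additive group containing `1`, so it is a
ring exactly when it contains all products of two elementary monomials.
-/

lemma brkt_self (x : ℂ) : brkt x x = 0 := by
  simp [brkt]

lemma brkt_comm (x y : ℂ) : brkt x y = -brkt y x := by
  simp [brkt]

lemma brkt_add_right (x a b : ℂ) : brkt x (a + b) = brkt x a + brkt x b := by
  simp only [brkt, map_add]
  ring

lemma brkt_ofReal_mul_right (x : ℂ) (r : ℝ) (y : ℂ) : brkt x (r * y) = r * brkt x y := by
  simp only [brkt, map_mul, conj_ofReal]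
  ring

lemma conj_brkt (x y : ℂ) : starRingEnd ℂ (brkt x y) = -brkt x y := by
  simp only [brkt, map_sub, map_mul, conj_conj]
  ring

lemma conj_brkt_div_brkt (a b c d : ℂ) :
    starRingEnd ℂ (brkt a b / brkt c d) = brkt a b / brkt c d := by
  rw [map_div₀, conj_brkt, conj_brkt, neg_div_neg_eq]

lemma brkt_ne_zero_of_norm_eq_one {α β : ℂ} (hα : ‖α‖ = 1) (hβ : ‖β‖ = 1)
    (hne : α ≠ β) (hne' : α ≠ -β) : brkt α β ≠ 0 := by
  have conj_eq_inv : ∀ {z : ℂ}, ‖z‖ = 1 → starRingEnd ℂ z = z⁻¹ := fun hz => by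
    rw [inv_def, normSq_eq_norm_sq, hz]
    simp
  have hα0 : α ≠ 0 := norm_ne_zero_iff.mp (by simp [hα])
  have hβ0 : β ≠ 0 := norm_ne_zero_iff.mp (by simp [hβ])
  intro h
  rw [brkt, conj_eq_inv hα, conj_eq_inv hβ] at h
  have hsq : (α - β) * (α + β) = 0 := by
    field_simp at h
    linear_combination h
  rcases mul_eq_zero.mp hsq with h' | h'
  · exact hne (sub_eq_zero.mp h')
  · exact hne' (eq_neg_of_add_eq_zero_left h')

noncomputable def proj (α β : ℂ) : ℂ →ₗ[ℝ] ℂ where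
  toFun q := brkt β q / brkt β α * α
  map_add' x y := by
    simp only [brkt_add_right]
    ring
  map_smul' r x := by
    simp only [real_smul, brkt_ofReal_mul_right, RingHom.id_apply]
    ring

lemma proj_apply (α β q : ℂ) : proj α β q = brkt β q / brkt β α * α := rfl

lemma lineInt_eq_proj_add_proj (α β p q : ℂ) :
    lineInt α β p q = proj β α p + proj α β q := rfl

lemma lineInt_zero_left (α β q : ℂ) : lineInt α β 0 q = proj α β q := by
  simp [lineInt_eq_proj_add_proj]

lemma proj_mem_span (α β q : ℂ) : proj α β q ∈ ℝ ∙ α := by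
  refine Submodule.mem_span_singleton.mpr ⟨(brkt β q / brkt β α).re, ?_⟩
  rw [real_smul, conj_eq_iff_re.mp (conj_brkt_div_brkt _ _ _ _), proj_apply]

lemma proj_self {α β : ℂ} (h : brkt β α ≠ 0) : proj α β α = α := by
  rw [proj_apply, div_self h, one_mul]

lemma proj_eq_self {α β x : ℂ} (h : brkt β α ≠ 0) (hx : x ∈ ℝ ∙ α) : proj α β x = x := by
  obtain ⟨r, rfl⟩ := Submodule.mem_span_singleton.mp hx
  rw [map_smul, proj_self h]

lemma proj_eq_zero {α β x : ℂ} (hx : x ∈ ℝ ∙ β) : proj α β x = 0 := by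
  obtain ⟨r, rfl⟩ := Submodule.mem_span_singleton.mp hx
  rw [map_smul, proj_apply, brkt_self, zero_div, zero_mul, smul_zero]

lemma proj_add_proj {α β : ℂ} (h : brkt α β ≠ 0) (x : ℂ) : proj α β x + proj β α x = x := by
  rw [proj_apply, proj_apply, brkt_comm β α]
  field_simp
  simp only [brkt]
  ring

lemma proj_proj_right {α β : ℂ} (h : brkt α β ≠ 0) (γ x : ℂ) :
    proj γ β (proj α β x) = proj γ β x := by
  rw [eq_sub_of_add_eq (proj_add_proj h x), map_sub, proj_eq_zero (proj_mem_span β α x),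
    sub_zero]

lemma proj_proj_of_mem_span {α β γ x : ℂ} (hβγ : brkt β γ ≠ 0) (hγα : brkt γ α ≠ 0)
    (hx : x ∈ ℝ ∙ α) : proj α γ (proj β γ x) = x := by
  rw [proj_proj_right hβγ, proj_eq_self hγα hx]

lemma proj_proj_proj_of_mem_span {α β γ x : ℂ} (hβα : brkt β α ≠ 0) (hβγ : brkt β γ ≠ 0)
    (hαγ : brkt α γ ≠ 0) (hx : x ∈ ℝ ∙ α) :
    proj α β (proj γ α (proj β γ x)) = -x := by
  have hγ : proj γ α (proj β γ x) = -proj γ β x := by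
    rw [eq_sub_of_add_eq (proj_add_proj hβγ x), map_sub, proj_eq_zero hx,
      proj_eq_self hαγ (proj_mem_span γ β x), zero_sub]
  rw [hγ, map_neg, eq_sub_of_add_eq' (proj_add_proj hβγ x), map_sub, proj_eq_self hβα hx,
    proj_eq_zero (proj_mem_span β γ x), sub_zero]

structure IsTransversal (U : Set ℂ) (α β : ℂ) : Prop where
  left_mem : α ∈ U
  right_mem : β ∈ U
  norm_left : ‖α‖ = 1
  norm_right : ‖β‖ = 1
  ne : α ≠ β
  ne_neg : α ≠ -β

namespace IsTransversal

variable {U : Set ℂ} {α β : ℂ}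

lemma of_norm_eq_one (hU : ∀ z ∈ U, ‖z‖ = 1) (hα : α ∈ U) (hβ : β ∈ U) (hne : α ≠ β)
    (hne' : α ≠ -β) : IsTransversal U α β :=
  ⟨hα, hβ, hU α hα, hU β hβ, hne, hne'⟩

lemma one_left (hU : ∀ z ∈ U, ‖z‖ = 1) (h1 : (1 : ℂ) ∈ U) (hα : α ∈ U) (hα1 : α ≠ 1)
    (hα1' : α ≠ -1) : IsTransversal U 1 α :=
  of_norm_eq_one hU h1 hα hα1.symm fun h => hα1' (by rw [h, neg_neg])

lemma symm (h : IsTransversal U α β) : IsTransversal U β α :=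
  ⟨h.right_mem, h.left_mem, h.norm_right, h.norm_left, h.ne.symm,
    fun e => h.ne_neg (by rw [e, neg_neg])⟩

lemma brkt_ne_zero (h : IsTransversal U α β) : brkt α β ≠ 0 :=
  brkt_ne_zero_of_norm_eq_one h.norm_left h.norm_right h.ne h.ne_neg

end IsTransversal

section RU

variable {U : Set ℂ} {α β γ x y : ℂ}

lemma zero_mem_RU : (0 : ℂ) ∈ RU U :=
  Set.mem_iUnion.2 ⟨0, Or.inl rfl⟩

lemma IsElem.mem_RU {z : ℂ} (hz : IsElem U z) : z ∈ RU U := by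
  obtain ⟨α, hα, β, hβ, hne, hne', rfl⟩ := hz
  exact Set.mem_iUnion.2 ⟨1, α, hα, β, hβ, hne, hne', 0, Or.inl rfl, 1, Or.inr rfl, rfl⟩

lemma stepSet_mono (h : IsTransversal U α β) : Monotone (stepSet U) := by
  refine monotone_nat_of_le_succ fun n p hp => ?_
  have hpp : lineInt α β p p = p := by
    rw [lineInt_eq_proj_add_proj, add_comm, proj_add_proj h.brkt_ne_zero]
  exact ⟨α, h.left_mem, β, h.right_mem, h.ne, h.ne_neg, p, hp, p, hp, hpp.symm⟩

lemma lineInt_mem_RU (h : IsTransversal U α β) {p q : ℂ} (hp : p ∈ RU U) (hq : q ∈ RU U) :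
    lineInt α β p q ∈ RU U := by
  obtain ⟨m, hm⟩ := Set.mem_iUnion.1 hp
  obtain ⟨k, hk⟩ := Set.mem_iUnion.1 hq
  exact Set.mem_iUnion.2 ⟨max m k + 1, α, h.left_mem, β, h.right_mem, h.ne, h.ne_neg,
    p, stepSet_mono h (le_max_left m k) hm, q, stepSet_mono h (le_max_right m k) hk, rfl⟩

lemma proj_mem_RU (h : IsTransversal U α β) (hx : x ∈ RU U) : proj α β x ∈ RU U :=
  lineInt_zero_left α β x ▸ lineInt_mem_RU h zero_mem_RU hx

lemma add_mem_RU_of_mem_span_of_mem_span (h : IsTransversal U α β) (hx : x ∈ RU U)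
    (hy : y ∈ RU U) (hxβ : x ∈ ℝ ∙ β) (hyα : y ∈ ℝ ∙ α) : x + y ∈ RU U := by
  have hsum : lineInt α β x y = x + y := by
    rw [lineInt_eq_proj_add_proj, proj_eq_self h.brkt_ne_zero hxβ,
      proj_eq_self h.symm.brkt_ne_zero hyα]
  exact hsum ▸ lineInt_mem_RU h hx hy

lemma add_mem_RU_of_mem_span (hαβ : IsTransversal U α β) (hβγ : IsTransversal U β γ)
    (hαγ : IsTransversal U α γ) (hx : x ∈ RU U) (hy : y ∈ RU U) (hxα : x ∈ ℝ ∙ α)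
    (hyα : y ∈ ℝ ∙ α) : x + y ∈ RU U := by
  have hback : proj α γ (proj β γ y + x) = x + y := by
    rw [map_add, proj_proj_of_mem_span hβγ.brkt_ne_zero hαγ.symm.brkt_ne_zero hyα,
      proj_eq_self hαγ.symm.brkt_ne_zero hxα, add_comm]
  exact hback ▸ proj_mem_RU hαγ (add_mem_RU_of_mem_span_of_mem_span hαβ (proj_mem_RU hβγ hy) hx
    (proj_mem_span β γ y) hxα)

lemma neg_mem_RU_of_mem_span (hαβ : IsTransversal U α β) (hβγ : IsTransversal U β γ)
    (hαγ : IsTransversal U α γ) (hx : x ∈ RU U) (hxα : x ∈ ℝ ∙ α) : -x ∈ RU U :=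
  proj_proj_proj_of_mem_span hαβ.symm.brkt_ne_zero hβγ.brkt_ne_zero hαγ.brkt_ne_zero hxα ▸
    proj_mem_RU hαβ (proj_mem_RU hαγ.symm (proj_mem_RU hβγ hx))

lemma add_mem_RU (hαβ : IsTransversal U α β) (hβγ : IsTransversal U β γ)
    (hαγ : IsTransversal U α γ) (hx : x ∈ RU U) (hy : y ∈ RU U) : x + y ∈ RU U := by
  have hsplit : x + y = (proj β α x + proj β α y) + (proj α β x + proj α β y) := by
    linear_combination -proj_add_proj hαβ.brkt_ne_zero x - proj_add_proj hαβ.brkt_ne_zero y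
  rw [hsplit]
  exact add_mem_RU_of_mem_span_of_mem_span hαβ
    (add_mem_RU_of_mem_span hαβ.symm hαγ hβγ (proj_mem_RU hαβ.symm hx) (proj_mem_RU hαβ.symm hy)
      (proj_mem_span β α x) (proj_mem_span β α y))
    (add_mem_RU_of_mem_span hαβ hβγ hαγ (proj_mem_RU hαβ hx) (proj_mem_RU hαβ hy)
      (proj_mem_span α β x) (proj_mem_span α β y))
    (add_mem (proj_mem_span β α x) (proj_mem_span β α y))
    (add_mem (proj_mem_span α β x) (proj_mem_span α β y))

lemma neg_mem_RU (hαβ : IsTransversal U α β) (hβγ : IsTransversal U β γ)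
    (hαγ : IsTransversal U α γ) (hx : x ∈ RU U) : -x ∈ RU U := by
  have hsplit : -x = -proj β α x + -proj α β x := by
    linear_combination proj_add_proj hαβ.brkt_ne_zero x
  rw [hsplit]
  exact add_mem_RU_of_mem_span_of_mem_span hαβ
    (neg_mem_RU_of_mem_span hαβ.symm hαγ hβγ (proj_mem_RU hαβ.symm hx) (proj_mem_span β α x))
    (neg_mem_RU_of_mem_span hαβ hβγ hαγ (proj_mem_RU hαβ hx) (proj_mem_span α β x))
    (neg_mem (proj_mem_span β α x)) (neg_mem (proj_mem_span α β x))

end RU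

section Scaling

variable {U : Set ℂ} {u v x : ℂ}

lemma smul_mem_RU_of_mem_projSet_of_mem_span_one (hU : ∀ z ∈ U, ‖z‖ = 1) {r : ℝ}
    (hr : r ∈ projSet U) (hx : x ∈ RU U) (hx1 : x ∈ ℝ ∙ (1 : ℂ)) : r • x ∈ RU U := by
  obtain ⟨γ, hγ, δ, hδ, hγδ, hγδ', z, ⟨α, hα, β, hβ, hαβ, hαβ', rfl⟩, hr⟩ := hr
  obtain ⟨c, rfl⟩ := Submodule.mem_span_singleton.mp hx1
  have hscale : proj γ δ (proj α β (c • 1)) = r • c • (1 : ℂ) := by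
    rw [map_smul, map_smul, ← lineInt_zero_left, ← lineInt_zero_left, ← hr]
    simp only [real_smul, mul_one]
    ring
  exact hscale ▸ proj_mem_RU (.of_norm_eq_one hU hγ hδ hγδ hγδ')
    (proj_mem_RU (.of_norm_eq_one hU hα hβ hαβ hαβ') hx)

lemma smul_mem_RU_of_mem_projSet (hU : ∀ z ∈ U, ‖z‖ = 1) (h1u : IsTransversal U 1 u)
    (h1v : IsTransversal U 1 v) (huv : IsTransversal U u v) {r : ℝ} (hr : r ∈ projSet U)
    (hx : x ∈ RU U) : r • x ∈ RU U := by
  have hsplit : r • x = r • proj 1 u x + proj u v (r • proj 1 v (proj u 1 x)) := by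
    rw [map_smul, proj_proj_of_mem_span h1v.brkt_ne_zero huv.symm.brkt_ne_zero
      (proj_mem_span u 1 x), ← smul_add, proj_add_proj h1u.brkt_ne_zero]
  rw [hsplit]
  exact add_mem_RU h1u huv h1v
    (smul_mem_RU_of_mem_projSet_of_mem_span_one hU hr (proj_mem_RU h1u hx) (proj_mem_span 1 u x))
    (proj_mem_RU huv (smul_mem_RU_of_mem_projSet_of_mem_span_one hU hr
      (proj_mem_RU h1v (proj_mem_RU h1u.symm hx)) (proj_mem_span 1 v _)))

lemma smul_mem_RU_of_mem_closure (hU : ∀ z ∈ U, ‖z‖ = 1) (h1u : IsTransversal U 1 u)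
    (h1v : IsTransversal U 1 v) (huv : IsTransversal U u v) {c : ℝ}
    (hc : c ∈ Subring.closure (projSet U)) (hx : x ∈ RU U) : c • x ∈ RU U := by
  induction hc using Subring.closure_induction generalizing x with
  | mem r hr => exact smul_mem_RU_of_mem_projSet hU h1u h1v huv hr hx
  | zero => exact (zero_smul ℝ x).symm ▸ zero_mem_RU
  | one => exact (one_smul ℝ x).symm ▸ hx
  | add a b _ _ ha hb => exact (add_smul a b x).symm ▸ add_mem_RU h1u huv h1v (ha hx) (hb hx)
  | neg a _ ha => exact (neg_smul a x).symm ▸ neg_mem_RU h1u huv h1v (ha hx)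
  | mul a b _ _ ha hb => exact (mul_smul a b x).symm ▸ ha (hb hx)

end Scaling

noncomputable abbrev zpSpan (U : Set ℂ) : Submodule (Subring.closure (projSet U)) ℂ :=
  Submodule.span (Subring.closure (projSet U)) {z | IsElem U z}

section Span

variable {U : Set ℂ} {u γ δ x z : ℂ}

lemma isZPComb_iff_mem_zpSpan {m : ℂ} : IsZPComb U m ↔ m ∈ zpSpan U := by
  rw [Submodule.mem_span_set']
  constructor
  · rintro ⟨n, c, z, hc, hz, rfl⟩
    exact ⟨n, fun i => ⟨c i, hc i⟩, fun i => ⟨z i, hz i⟩, rfl⟩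
  · rintro ⟨n, c, z, rfl⟩
    exact ⟨n, fun i => c i, fun i => z i, fun i => (c i).2, fun i => (z i).2, rfl⟩

lemma IsTransversal.isElem_one (h : IsTransversal U 1 u) : IsElem U 1 :=
  ⟨1, h.left_mem, u, h.right_mem, h.ne, h.ne_neg, by
    rw [lineInt_zero_left, proj_eq_self h.symm.brkt_ne_zero (Submodule.mem_span_singleton_self 1)]⟩

lemma proj_mem_zpSpan_of_isElem_of_isTransversal_one (hγδ : IsTransversal U γ δ)
    (h1δ : IsTransversal U 1 δ) (hz : IsElem U z) : proj γ δ z ∈ zpSpan U := by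
  obtain ⟨c, hc⟩ := Submodule.mem_span_singleton.mp (proj_mem_span 1 δ z)
  have hcP : c ∈ projSet U := ⟨1, h1δ.left_mem, δ, h1δ.right_mem, h1δ.ne, h1δ.ne_neg, z, hz,
    by rw [lineInt_zero_left, ← hc, real_smul, mul_one]⟩
  have hfactor : proj γ δ z = (⟨c, Subring.subset_closure hcP⟩ : Subring.closure (projSet U)) •
      proj γ δ 1 := by
    rw [← proj_proj_right h1δ.brkt_ne_zero, ← hc, map_smul]
    rfl
  rw [hfactor]
  exact Submodule.smul_mem _ _ (Submodule.subset_span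
    ⟨γ, hγδ.left_mem, δ, hγδ.right_mem, hγδ.ne, hγδ.ne_neg, (lineInt_zero_left γ δ 1).symm⟩)

lemma proj_mem_zpSpan_of_isElem (hU : ∀ z ∈ U, ‖z‖ = 1) (h1 : (1 : ℂ) ∈ U)
    (hγδ : IsTransversal U γ δ) (hz : IsElem U z) : proj γ δ z ∈ zpSpan U := by
  by_cases hδ : δ = 1 ∨ δ = -1
  · have hγ : γ ≠ 1 ∧ γ ≠ -1 := by
      rcases hδ with rfl | rfl
      exacts [⟨hγδ.ne, hγδ.ne_neg⟩, ⟨by simpa using hγδ.ne_neg, hγδ.ne⟩]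
    rw [eq_sub_of_add_eq (proj_add_proj hγδ.brkt_ne_zero z)]
    exact sub_mem (Submodule.subset_span hz) (proj_mem_zpSpan_of_isElem_of_isTransversal_one
      hγδ.symm (.one_left hU h1 hγδ.left_mem hγ.1 hγ.2) hz)
  · obtain ⟨hδ1, hδ1'⟩ := not_or.mp hδ
    exact proj_mem_zpSpan_of_isElem_of_isTransversal_one hγδ
      (.one_left hU h1 hγδ.right_mem hδ1 hδ1') hz

lemma proj_mem_zpSpan (hU : ∀ z ∈ U, ‖z‖ = 1) (h1 : (1 : ℂ) ∈ U) (hγδ : IsTransversal U γ δ)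
    (hx : x ∈ zpSpan U) : proj γ δ x ∈ zpSpan U := by
  induction hx using Submodule.span_induction with
  | mem z hz => exact proj_mem_zpSpan_of_isElem hU h1 hγδ hz
  | zero => exact (map_zero (proj γ δ)).symm ▸ zero_mem _
  | add a b _ _ ha hb => exact (map_add (proj γ δ) a b).symm ▸ add_mem ha hb
  | smul c a _ ha =>
    rw [Subring.smul_def, map_smul, ← Subring.smul_def]
    exact Submodule.smul_mem _ c ha

lemma RU_subset_zpSpan (hU : ∀ z ∈ U, ‖z‖ = 1) (h1u : IsTransversal U 1 u) :
    RU U ⊆ zpSpan U := by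
  refine Set.iUnion_subset fun n => ?_
  induction n with
  | zero =>
    rintro x (rfl | rfl)
    exacts [zero_mem _, Submodule.subset_span h1u.isElem_one]
  | succ n ih =>
    rintro x ⟨α, hα, β, hβ, hne, hne', p, hp, q, hq, rfl⟩
    have hαβ : IsTransversal U α β := .of_norm_eq_one hU hα hβ hne hne'
    rw [lineInt_eq_proj_add_proj]
    exact add_mem (proj_mem_zpSpan hU h1u.left_mem hαβ.symm (ih hp))
      (proj_mem_zpSpan hU h1u.left_mem hαβ (ih hq))

lemma zpSpan_subset_RU (hU : ∀ z ∈ U, ‖z‖ = 1) (h1u : IsTransversal U 1 u)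
    (h1v : IsTransversal U 1 v) (huv : IsTransversal U u v) : (zpSpan U : Set ℂ) ⊆ RU U := by
  intro x hx
  induction hx using Submodule.span_induction with
  | mem z hz => exact hz.mem_RU
  | zero => exact zero_mem_RU
  | add a b _ _ ha hb => exact add_mem_RU h1u huv h1v ha hb
  | smul c a _ ha => exact smul_mem_RU_of_mem_closure hU h1u h1v huv c.2 ha

lemma mul_mem_zpSpan (H : ∀ z z' : ℂ, IsElem U z → IsElem U z' → z * z' ∈ zpSpan U)
    {a b : ℂ} (ha : a ∈ zpSpan U) (hb : b ∈ zpSpan U) : a * b ∈ zpSpan U := by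
  have hle : zpSpan U * zpSpan U ≤ zpSpan U := by
    rw [Submodule.span_mul_span, Submodule.span_le]
    rintro _ ⟨z, hz, z', hz', rfl⟩
    exact H z z' hz hz'
  exact hle (Submodule.mul_mem_mul ha hb)

end Span

theorem stmt13_general (U : Set ℂ) (hU : ∀ z ∈ U, ‖z‖ = 1) (h1U : (1 : ℂ) ∈ U)
    (u v : ℂ) (hu : u ∈ U) (hv : v ∈ U)
    (hu1 : u ≠ 1) (hu1' : u ≠ -1) (hv1 : v ≠ 1) (hv1' : v ≠ -1)
    (huv : u ≠ v) (huv' : u ≠ -v) :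
    (∃ A : Subring ℂ, (A : Set ℂ) = RU U) ↔
      ∀ z z' : ℂ, IsElem U z → IsElem U z' → IsZPComb U (z * z') := by
  have ht1u : IsTransversal U 1 u := .one_left hU h1U hu hu1 hu1'
  have ht1v : IsTransversal U 1 v := .one_left hU h1U hv hv1 hv1'
  have htuv : IsTransversal U u v := .of_norm_eq_one hU hu hv huv huv'
  simp only [isZPComb_iff_mem_zpSpan]
  constructor
  · rintro ⟨A, hA⟩ z z' hz hz'
    have hA' : ∀ {x}, x ∈ A ↔ x ∈ RU U := by
      intro x
      rw [← SetLike.mem_coe, hA]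
    exact RU_subset_zpSpan hU ht1u (hA'.mp (mul_mem (hA'.mpr hz.mem_RU) (hA'.mpr hz'.mem_RU)))
  · intro H
    refine ⟨((zpSpan U).toSubalgebra (Submodule.subset_span ht1u.isElem_one)
      fun a b => mul_mem_zpSpan H).toSubring, ?_⟩
    exact (RU_subset_zpSpan hU ht1u).antisymm' (zpSpan_subset_RU hU ht1u ht1v htuv)

/-- if `1 ∈ U` and `U` contains `u, v, w` with `1, u, v, w` pairwise
non-±-equal, then `R(U)` is a subring of `ℂ` iff every pairwise product of elementary
monomials is a `ℤ[P]`-linear combination of elementary monomials. -/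
theorem stmt13 (U : Set ℂ) (hU : ∀ z ∈ U, ‖z‖ = 1) (h1U : (1 : ℂ) ∈ U)
    (u v w : ℂ) (hu : u ∈ U) (hv : v ∈ U) (hw : w ∈ U)
    (hu1 : u ≠ 1) (hu1' : u ≠ -1) (hv1 : v ≠ 1) (hv1' : v ≠ -1)
    (hw1 : w ≠ 1) (hw1' : w ≠ -1)
    (huv : u ≠ v) (huv' : u ≠ -v) (huw : u ≠ w) (huw' : u ≠ -w)
    (hvw : v ≠ w) (hvw' : v ≠ -w) :
    (∃ A : Subring ℂ, (A : Set ℂ) = RU U) ↔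
      ∀ z z' : ℂ, IsElem U z → IsElem U z' → IsZPComb U (z * z') :=
  stmt13_general U hU h1U u v hu hv hu1 hu1' hv1 hv1' huv huv'
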